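/- Let (T,v) be a geodesically complete rooted tree. Then h(T) > 0 if and only if (T,v) is pseudo-regular. Furthermore, if (T,v) is K-pseudo-regular, then h(T) ≥ 1/(7K). -/

import Mathlib

/-!
If `(T,v)` is `K`-pseudo-regular and `A` is finite, let every `a ∈ A` send mass
`(1/2)^⌈d(a,b)/K⌉` to each exit `b` below it, i.e. to each first vertex outside `A` on a
geodesic going down from `a`. Either `a` has an exit within distance `K`, or the ball of radius
`K` below `a` lies in `A`; then the two descendants at depth `K` given by pseudo-regularity have
disjoint sets of exits and forward their mass at half the price, so by induction on the height
every `a` sends at least `1/2`. The ancestors in `A` of an exit `b` are at distinct distances from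
`b`, so `b` receives at most `K (1/2 + 1/4 + ⋯) = K`. Hence `|A| ≤ 2K |∂A|`.

Conversely, if `(T,v)` is not `K`-pseudo-regular, some vertex `a` has a single descendant at
depth `K`, and the `K` vertices of a geodesic ray through `a` starting at `a` form a set whose
boundary is at most the parent of `a` and the next vertex of the ray; so `h(T) ≤ 2/K`.
-/

open scoped ENNReal

namespace TreePaper

variable {V : Type*}

/-- The (outer) vertex boundary `∂A = {w : d(w,A) = 1}` of a set of vertices. -/
def vboundary (G : SimpleGraph V) (A : Set V) : Set V :=
  {w | w ∉ A ∧ ∃ a ∈ A, G.Adj w a}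

/-- The ratio `|∂A| / |A|`, valued in `ℝ≥0∞`. -/
noncomputable def eratio (G : SimpleGraph V) (A : Finset V) : ℝ≥0∞ :=
  ((vboundary G (A : Set V)).encard : ℝ≥0∞) / (A.card : ℝ≥0∞)

/-- The Cheeger isoperimetric constant `h(Γ) = inf_A |∂A|/|A|`, the infimum over all
non-empty finite subsets of vertices. -/
noncomputable def cheeger (G : SimpleGraph V) : ℝ≥0∞ :=
  ⨅ (A : Finset V) (_ : A.Nonempty), eratio G A

/-- A (combinatorial) geodesic ray emanating from `v`. -/
def IsRay (G : SimpleGraph V) (v : V) (F : ℕ → V) : Prop :=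
  F 0 = v ∧ ∀ m n : ℕ, G.dist (F m) (F n) = Nat.dist m n

/-- A rooted tree is geodesically complete iff every vertex `x ≠ v` lies on a geodesic
ray from the root. -/
def GeodComplete (G : SimpleGraph V) (v : V) : Prop :=
  ∀ x : V, x ≠ v → ∃ F : ℕ → V, IsRay G v F ∧ ∃ n : ℕ, F n = x

/-- `m` lies on the geodesic `[x y]`. -/
def Btw (G : SimpleGraph V) (x m y : V) : Prop :=
  G.dist x m + G.dist m y = G.dist x y

/-- `(T,v)` is `K`-pseudo-regular. -/
def KPseudoRegular (G : SimpleGraph V) (v : V) (K : ℕ) : Prop :=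
  ∀ a : V, ∃ y₁ y₂ : V, y₁ ≠ y₂ ∧
    G.dist v y₁ = G.dist v a + K ∧ Btw G v a y₁ ∧
    G.dist v y₂ = G.dist v a + K ∧ Btw G v a y₂

open SimpleGraph

section Geodesics

variable {G : SimpleGraph V} {w x y z : V}

@[simp]
lemma btw_self_left : Btw G x x y := by simp [Btw]

@[simp]
lemma btw_self_right : Btw G x y y := by simp [Btw]

lemma btw_of_adj (h : G.Adj x y) (hxy : G.dist w y = G.dist w x + 1) : Btw G w x y := by
  rw [Btw, dist_eq_one_iff_adj.mpr h, hxy]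

namespace Btw

variable (hc : G.Connected)
include hc

lemma trans_left (h₁ : Btw G w y z) (h₂ : Btw G w x y) : Btw G w x z := by
  have := hc.dist_triangle (u := w) (v := x) (w := z)
  have := hc.dist_triangle (u := x) (v := y) (w := z)
  unfold Btw at *
  omega

lemma trans_left_right (h₁ : Btw G w y z) (h₂ : Btw G w x y) : Btw G x y z := by
  have := hc.dist_triangle (u := w) (v := x) (w := z)
  have := hc.dist_triangle (u := x) (v := y) (w := z)
  unfold Btw at *
  omega

lemma trans_right (h₁ : Btw G w x z) (h₂ : Btw G x y z) : Btw G w y z := by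
  have := hc.dist_triangle (u := w) (v := y) (w := z)
  have := hc.dist_triangle (u := w) (v := x) (w := y)
  unfold Btw at *
  omega

lemma trans_right_left (h₁ : Btw G w x z) (h₂ : Btw G x y z) : Btw G w x y := by
  have := hc.dist_triangle (u := w) (v := y) (w := z)
  have := hc.dist_triangle (u := w) (v := x) (w := y)
  unfold Btw at *
  omega

end Btw

lemma exists_btw_dist_eq (hc : G.Connected) {i : ℕ} (hi : i ≤ G.dist x z) :
    ∃ y, Btw G x y z ∧ G.dist x y = i := by
  obtain ⟨p, hp⟩ := hc.exists_walk_length_eq_dist x z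
  have h₁ : G.dist x (p.getVert i) ≤ i := by
    simpa [hp, hi] using dist_le (p.take i)
  have h₂ : G.dist (p.getVert i) z ≤ G.dist x z - i := by
    simpa [hp] using dist_le (p.drop i)
  have := hc.dist_triangle (u := x) (v := p.getVert i) (w := z)
  exact ⟨p.getVert i, by unfold Btw; omega, by omega⟩

section Tree

variable (hT : G.IsTree)
include hT

/-- Geodesics in a tree are its unique paths. -/
lemma eq_of_btw_of_dist_eq (hy : Btw G x y z) (hw : Btw G x w z)
    (h : G.dist x y = G.dist x w) : y = w := by
  have hc := hT.connected
  obtain ⟨p₁, hp₁⟩ := hc.exists_walk_length_eq_dist x y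
  obtain ⟨q₁, hq₁⟩ := hc.exists_walk_length_eq_dist y z
  obtain ⟨p₂, hp₂⟩ := hc.exists_walk_length_eq_dist x w
  obtain ⟨q₂, hq₂⟩ := hc.exists_walk_length_eq_dist w z
  have h₁ : (p₁.append q₁).IsPath :=
    Walk.isPath_of_length_eq_dist _ (by rw [Walk.length_append, hp₁, hq₁, hy])
  have h₂ : (p₂.append q₂).IsPath :=
    Walk.isPath_of_length_eq_dist _ (by rw [Walk.length_append, hp₂, hq₂, hw])
  have key := congrArg (Walk.getVert · p₁.length) ((hT.existsUnique_path x z).unique h₁ h₂)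
  have hlen : p₁.length = p₂.length := by rw [hp₁, hp₂, h]
  simp only [Walk.getVert_append', le_refl, if_true, hlen] at key
  rwa [Walk.getVert_length, ← hlen, Walk.getVert_length] at key

lemma btw_of_btw_of_dist_le (hy : Btw G x y z) (hw : Btw G x w z)
    (h : G.dist x y ≤ G.dist x w) : Btw G x y w := by
  have hc := hT.connected
  obtain ⟨y', hy', hdist⟩ := exists_btw_dist_eq hc h
  rwa [eq_of_btw_of_dist_eq hT hy (Btw.trans_left hc hw hy') hdist.symm]

lemma btw_or_btw {a b u : V} (hay : Btw G x a y) (hyb : Btw G x y b) (hu : Btw G a u b) :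
    Btw G a u y ∨ Btw G y u b := by
  have hc := hT.connected
  have hab := Btw.trans_left hc hyb hay
  have hau := Btw.trans_right_left hc hab hu
  have hub := Btw.trans_right hc hab hu
  rcases le_total (G.dist x u) (G.dist x y) with h | h
  · exact .inl (Btw.trans_left_right hc (btw_of_btw_of_dist_le hT hub hyb h) hau)
  · exact .inr (Btw.trans_left_right hc hub (btw_of_btw_of_dist_le hT hyb hub h))

end Tree

end Geodesics

section Cheeger

open Filter Topology

variable {G : SimpleGraph V}

lemma inv_le_cheeger_of_card_le (n : ℕ)
    (h : ∀ A B : Finset V, A.Nonempty → vboundary G A = B → A.card ≤ n * B.card) :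
    (n : ℝ≥0∞)⁻¹ ≤ cheeger G := by
  refine le_iInf₂ fun A hA => ?_
  have hA₀ : (A.card : ℝ≥0∞) ≠ 0 := by simpa using hA.ne_empty
  rw [eratio, ENNReal.le_div_iff_mul_le (.inl hA₀) (.inl (ENNReal.natCast_ne_top _))]
  obtain hfin | hinf := (vboundary G A).finite_or_infinite
  · have hAB := h A hfin.toFinset hA hfin.coe_toFinset.symm
    have hn : (n : ℝ≥0∞) ≠ 0 := by
      rintro hn
      simp only [Nat.cast_eq_zero.mp hn, zero_mul, nonpos_iff_eq_zero, Finset.card_eq_zero] at hAB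
      exact hA.ne_empty hAB
    rw [hfin.encard_eq_coe_toFinset_card, ENNReal.inv_mul_le_iff hn (ENNReal.natCast_ne_top n)]
    exact_mod_cast hAB
  · simp [hinf.encard_eq]

lemma cheeger_eq_zero_of_forall_exists_card_eq (c : ℕ)
    (h : ∀ n, 0 < n → ∃ A : Finset V, A.card = n ∧ (vboundary G A).encard ≤ c) :
    cheeger G = 0 := by
  have hle : ∀ n : ℕ, cheeger G ≤ c * ((n + 1 : ℕ) : ℝ≥0∞)⁻¹ := fun n => by
    obtain ⟨A, hcard, hA⟩ := h (n + 1) n.succ_pos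
    calc cheeger G ≤ eratio G A := iInf₂_le A (Finset.card_pos.mp (hcard ▸ n.succ_pos))
      _ ≤ c / ((n + 1 : ℕ) : ℝ≥0∞) := by
        rw [eratio, hcard]
        gcongr
        exact_mod_cast hA
      _ = _ := div_eq_mul_inv _ _
  have hlim : Tendsto (fun n : ℕ => (c : ℝ≥0∞) * ((n + 1 : ℕ) : ℝ≥0∞)⁻¹) atTop (𝓝 0) := by
    simpa using ENNReal.Tendsto.const_mul
      ((tendsto_add_atTop_iff_nat 1).2 ENNReal.tendsto_inv_nat_nhds_zero)
      (.inr (ENNReal.natCast_ne_top c))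
  exact le_antisymm (ge_of_tendsto' hlim hle) bot_le

end Cheeger

lemma sum_inv_two_pow_add_one_le (T : Finset ℕ) : ∑ q ∈ T, (2⁻¹ : ℝ) ^ (q + 1) ≤ 1 := by
  have h := summable_geometric_two.sum_le_tsum T (fun q _ => by positivity)
  rw [tsum_geometric_two] at h
  simp only [pow_succ, ← Finset.sum_mul, one_div] at h ⊢
  linarith

lemma sum_inv_two_pow_div_add_one_le {K : ℕ} (hK : 0 < K) (S : Finset ℕ) :
    ∑ t ∈ S, (2⁻¹ : ℝ) ^ (t / K + 1) ≤ K := by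
  classical
  have hfiber (q : ℕ) : (S.filter (· / K = q)).card ≤ K := by
    calc _ ≤ (Finset.Ico (q * K) (q * K + K)).card := Finset.card_le_card fun t ht => by
            rw [Finset.mem_filter] at ht
            rw [Finset.mem_Ico, ← ht.2]
            exact ⟨Nat.div_mul_le_self t K, Nat.lt_div_mul_add hK⟩
      _ = K := by simp
  calc ∑ t ∈ S, (2⁻¹ : ℝ) ^ (t / K + 1)
      = ∑ q ∈ S.image (· / K), (S.filter (· / K = q)).card • (2⁻¹ : ℝ) ^ (q + 1) :=
        Finset.sum_comp (fun q => (2⁻¹ : ℝ) ^ (q + 1)) (· / K)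
    _ ≤ ∑ q ∈ S.image (· / K), K • (2⁻¹ : ℝ) ^ (q + 1) :=
        Finset.sum_le_sum fun q _ => nsmul_le_nsmul_left (by positivity) (hfiber q)
    _ = K * ∑ q ∈ S.image (· / K), (2⁻¹ : ℝ) ^ (q + 1) := by
        rw [← Finset.smul_sum, nsmul_eq_mul]
    _ ≤ K := mul_le_of_le_one_right (by positivity) (sum_inv_two_pow_add_one_le _)

lemma KPseudoRegular.pos {G : SimpleGraph V} {v : V} {K : ℕ} (hc : G.Connected)
    (h : KPseudoRegular G v K) : 0 < K := by
  obtain ⟨y₁, y₂, hne, h₁, -, h₂, -⟩ := h v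
  by_contra hK
  simp only [Nat.eq_zero_of_not_pos hK, dist_self, add_zero, hc.dist_eq_zero_iff] at h₁ h₂
  exact hne (h₁.symm.trans h₂)

section Exits

variable {G : SimpleGraph V} {v : V} {A : Finset V} {K : ℕ} {a b x y : V}

structure IsExit (G : SimpleGraph V) (v : V) (A : Finset V) (a b : V) : Prop where
  mem : a ∈ A
  not_mem : b ∉ A
  btw : Btw G v a b
  mem_of_btw : ∀ u, Btw G a u b → u ≠ b → u ∈ A

open Classical in
/-- `(1/2)^⌈d(a,b)/K⌉`, since `(d - 1) / K + 1 = ⌈d/K⌉` for `d ≥ 1`. -/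
noncomputable def exitWeight (G : SimpleGraph V) (v : V) (A : Finset V) (K : ℕ) (a b : V) : ℝ :=
  if IsExit G v A a b then 2⁻¹ ^ ((G.dist a b - 1) / K + 1) else 0

lemma exitWeight_nonneg : 0 ≤ exitWeight G v A K a b := by
  unfold exitWeight
  split_ifs <;> positivity

lemma exitWeight_of_not_isExit (h : ¬IsExit G v A a b) : exitWeight G v A K a b = 0 :=
  if_neg h

lemma IsExit.dist_pos (hc : G.Connected) (h : IsExit G v A a b) : 0 < G.dist a b :=
  hc.pos_dist_of_ne (ne_of_mem_of_not_mem h.mem h.not_mem)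

lemma IsExit.mem_vboundary (hc : G.Connected) (h : IsExit G v A a b) :
    b ∈ vboundary G A := by
  have hd := h.dist_pos hc
  obtain ⟨u, hu, hdu⟩ := exists_btw_dist_eq hc (Nat.sub_le (G.dist a b) 1)
  have hub : G.dist u b = 1 := by unfold Btw at hu; omega
  have hadj : G.Adj u b := dist_eq_one_iff_adj.mp hub
  exact ⟨h.not_mem, u, h.mem_of_btw u hu hadj.ne, hadj.symm⟩

lemma exists_isExit_btw (hc : G.Connected) (ha : a ∈ A) (hx : x ∉ A) (hax : Btw G v a x) :
    ∃ b, IsExit G v A a b ∧ Btw G a b x := by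
  induction hn : G.dist a x using Nat.strong_induction_on generalizing x with
  | _ n ih =>
  by_cases hseg : ∀ u, Btw G a u x → u ≠ x → u ∈ A
  · exact ⟨x, ⟨ha, hx, hax, hseg⟩, btw_self_right⟩
  push Not at hseg
  obtain ⟨u, hu, hux, huA⟩ := hseg
  have hlt : G.dist a u < n := by
    have := hc.pos_dist_of_ne hux
    unfold Btw at hu
    omega
  obtain ⟨b, hb, hbu⟩ := ih _ hlt huA (Btw.trans_right_left hc hax hu) rfl
  exact ⟨b, hb, Btw.trans_left hc hu hbu⟩

lemma IsExit.of_btw (hT : G.IsTree) (hay : Btw G v a y) (hA : ∀ u, Btw G a u y → u ∈ A)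
    (h : IsExit G v A y b) : IsExit G v A a b where
  mem := hA a btw_self_left
  not_mem := h.not_mem
  btw := Btw.trans_left hT.connected h.btw hay
  mem_of_btw u hu hub := (btw_or_btw hT hay h.btw hu).elim (hA u) (h.mem_of_btw u · hub)

lemma exitWeight_eq_half_mul (hT : G.IsTree) (hK : 0 < K) (hay : Btw G v a y)
    (hdist : G.dist a y = K) (hA : ∀ u, Btw G a u y → u ∈ A) (h : IsExit G v A y b) :
    exitWeight G v A K a b = 2⁻¹ * exitWeight G v A K y b := by
  have hab := h.of_btw hT hay hA
  have hd := h.dist_pos hT.connected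
  have hsplit : G.dist a b - 1 = G.dist y b - 1 + K := by
    have := hab.btw
    have := h.btw
    unfold Btw at *
    omega
  rw [exitWeight, exitWeight, if_pos hab, if_pos h, hsplit, Nat.add_div_right _ hK, pow_succ']

lemma sum_exitWeight_le (hT : G.IsTree) (hK : 0 < K) (A : Finset V) (b : V) :
    ∑ a ∈ A, exitWeight G v A K a b ≤ K := by
  classical
  have hinj : Set.InjOn (G.dist · b - 1) (A.filter (IsExit G v A · b)) := by
    intro a₁ h₁ a₂ h₂ he
    rw [Finset.mem_coe, Finset.mem_filter] at h₁ h₂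
    have hd₁ := h₁.2.dist_pos hT.connected
    have hd₂ := h₂.2.dist_pos hT.connected
    have hb₁ := h₁.2.btw
    have hb₂ := h₂.2.btw
    exact eq_of_btw_of_dist_eq hT hb₁ hb₂ (by unfold Btw at hb₁ hb₂; simp only at he; omega)
  calc ∑ a ∈ A, exitWeight G v A K a b
      = ∑ a ∈ A.filter (IsExit G v A · b), (2⁻¹ : ℝ) ^ ((G.dist a b - 1) / K + 1) := by
        rw [Finset.sum_filter]; rfl
    _ = ∑ t ∈ (A.filter (IsExit G v A · b)).image (G.dist · b - 1), (2⁻¹ : ℝ) ^ (t / K + 1) :=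
        (Finset.sum_image (f := fun t => (2⁻¹ : ℝ) ^ (t / K + 1)) hinj).symm
    _ ≤ K := sum_inv_two_pow_div_add_one_le hK _

end Exits

section Counting

variable {G : SimpleGraph V} {v : V} {K : ℕ}

lemma half_le_sum_exitWeight (hT : G.IsTree) (hK : KPseudoRegular G v K) {A B : Finset V}
    (hB : vboundary G A ⊆ B) {a : V} (ha : a ∈ A) :
    2⁻¹ ≤ ∑ b ∈ B, exitWeight G v A K a b := by
  have hc := hT.connected
  have hK₀ := hK.pos hc
  induction hn : A.sup (G.dist v) - G.dist v a using Nat.strong_induction_on generalizing a with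
  | _ n ih =>
  by_cases hnear : ∃ b, IsExit G v A a b ∧ G.dist a b ≤ K
  · obtain ⟨b, hb, hbK⟩ := hnear
    have hw : exitWeight G v A K a b = 2⁻¹ := by
      rw [exitWeight, if_pos hb, Nat.div_eq_of_lt (by omega), zero_add, pow_one]
    exact hw ▸ Finset.single_le_sum (f := exitWeight G v A K a) (fun _ _ => exitWeight_nonneg)
      (hB (hb.mem_vboundary hc))
  have hball : ∀ x, Btw G v a x → G.dist a x ≤ K → x ∈ A := by
    intro x hax hxK
    by_contra hx
    obtain ⟨b, hb, hbx⟩ := exists_isExit_btw hc ha hx hax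
    exact hnear ⟨b, hb, by unfold Btw at hbx; omega⟩
  obtain ⟨y₁, y₂, hne, hl₁, hay₁, hl₂, hay₂⟩ := hK a
  have hd₁ : G.dist a y₁ = K := by unfold Btw at hay₁; omega
  have hd₂ : G.dist a y₂ = K := by unfold Btw at hay₂; omega
  have hseg {y : V} (hay : Btw G v a y) (hd : G.dist a y = K) (u : V) (hu : Btw G a u y) :
      u ∈ A :=
    hball u (Btw.trans_right_left hc hay hu) (by unfold Btw at hu; omega)
  have hmass {y : V} (hay : Btw G v a y) (hd : G.dist a y = K) :
      2⁻¹ ≤ ∑ b ∈ B, exitWeight G v A K y b := by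
    have hy := hseg hay hd y btw_self_right
    have := Finset.le_sup (f := G.dist v) hy
    have := Finset.le_sup (f := G.dist v) ha
    exact ih _ (by unfold Btw at hay; omega) hy rfl
  have hpoint (b : V) :
      2⁻¹ * (exitWeight G v A K y₁ b + exitWeight G v A K y₂ b) ≤ exitWeight G v A K a b := by
    have hdisj : IsExit G v A y₁ b → ¬IsExit G v A y₂ b := fun h₁ h₂ =>
      hne (eq_of_btw_of_dist_eq hT h₁.btw h₂.btw (by omega))
    by_cases h₁ : IsExit G v A y₁ b
    · rw [exitWeight_eq_half_mul hT hK₀ hay₁ hd₁ (hseg hay₁ hd₁) h₁,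
        exitWeight_of_not_isExit (hdisj h₁), add_zero]
    rw [exitWeight_of_not_isExit h₁, zero_add]
    by_cases h₂ : IsExit G v A y₂ b
    · rw [exitWeight_eq_half_mul hT hK₀ hay₂ hd₂ (hseg hay₂ hd₂) h₂]
    · rw [exitWeight_of_not_isExit h₂, mul_zero]
      exact exitWeight_nonneg
  calc (2⁻¹ : ℝ) = 2⁻¹ * (2⁻¹ + 2⁻¹) := by norm_num
    _ ≤ 2⁻¹ * (∑ b ∈ B, exitWeight G v A K y₁ b + ∑ b ∈ B, exitWeight G v A K y₂ b) := by
      gcongr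
      exacts [hmass hay₁ hd₁, hmass hay₂ hd₂]
    _ = ∑ b ∈ B, 2⁻¹ * (exitWeight G v A K y₁ b + exitWeight G v A K y₂ b) := by
      rw [← Finset.sum_add_distrib, Finset.mul_sum]
    _ ≤ ∑ b ∈ B, exitWeight G v A K a b := Finset.sum_le_sum fun b _ => hpoint b

lemma card_le_two_mul_card_of_vboundary_eq (hT : G.IsTree) (hK : KPseudoRegular G v K)
    {A B : Finset V} (hB : vboundary G A = B) : A.card ≤ 2 * K * B.card := by
  have hmass : (A.card : ℝ) * 2⁻¹ ≤ B.card * K :=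
    calc (A.card : ℝ) * 2⁻¹ = ∑ _a ∈ A, (2⁻¹ : ℝ) := by simp
      _ ≤ ∑ a ∈ A, ∑ b ∈ B, exitWeight G v A K a b :=
        Finset.sum_le_sum fun _ ha => half_le_sum_exitWeight hT hK hB.subset ha
      _ = ∑ b ∈ B, ∑ a ∈ A, exitWeight G v A K a b := Finset.sum_comm
      _ ≤ ∑ _b ∈ B, (K : ℝ) :=
        Finset.sum_le_sum fun b _ => sum_exitWeight_le hT (hK.pos hT.connected) A b
      _ = B.card * K := by simp
  have : (A.card : ℝ) ≤ (2 * K * B.card : ℕ) := by push_cast; linarith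
  exact_mod_cast this

end Counting

section Rays

variable {G : SimpleGraph V} {v : V} {F : ℕ → V}

lemma IsRay.dist_eq (hF : IsRay G v F) (i : ℕ) : G.dist v (F i) = i := by
  simpa [hF.1, Nat.dist_zero_left] using hF.2 0 i

lemma IsRay.btw (hF : IsRay G v F) {i j : ℕ} (hij : i ≤ j) : Btw G v (F i) (F j) := by
  rw [Btw, hF.dist_eq, hF.dist_eq, hF.2, Nat.dist_eq_sub_of_le hij]
  omega

lemma IsRay.injective (hF : IsRay G v F) : Function.Injective F := fun i j h => by
  simpa only [h, hF.dist_eq] using (hF.dist_eq i).symm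

lemma exists_isRay_apply_eq (hgc : GeodComplete G v) {x₀ : V} (hx₀ : x₀ ≠ v) (a : V) :
    ∃ F m, IsRay G v F ∧ F m = a := by
  by_cases ha : a = v
  · obtain ⟨F, hF, -⟩ := hgc x₀ hx₀
    exact ⟨F, 0, hF, hF.1.trans ha.symm⟩
  · obtain ⟨F, hF, m, hm⟩ := hgc a ha
    exact ⟨F, m, hF, hm⟩

/-- A boundary vertex is the parent or a child of some `F (m + i)`. A child extends to a ray,
which reaches level `m + K` at a descendant of `F m`, that is, at `F (m + K)`; so the child is an
ancestor of `F (m + K)` and lies on the ray. -/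
lemma vboundary_image_ray_subset [DecidableEq V] (hT : G.IsTree) (hgc : GeodComplete G v)
    (hF : IsRay G v F) {m K : ℕ} (huniq : ∀ y₁ y₂, Btw G v (F m) y₁ → G.dist v y₁ = m + K →
      Btw G v (F m) y₂ → G.dist v y₂ = m + K → y₁ = y₂) :
    vboundary G ((Finset.range K).image (F <| m + ·)) ⊆ {F (m - 1), F (m + K)} := by
  have hc := hT.connected
  have hmem {j : ℕ} (hj : j < K) : F (m + j) ∈ (Finset.range K).image (F <| m + ·) :=
    Finset.mem_image_of_mem _ (Finset.mem_range.mpr hj)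
  rintro z ⟨hz, x, hx, hzx⟩
  simp only [Finset.coe_image, Finset.coe_range, Set.mem_image, Set.mem_Iio] at hx
  obtain ⟨i, hi, rfl⟩ := hx
  rcases hT.dist_eq_dist_add_one_of_adj v hzx with hchild | hparent
  · rw [hF.dist_eq] at hchild
    have hzv : z ≠ v := by
      rintro rfl
      simp at hchild
    obtain ⟨F', hF', m', rfl⟩ := hgc z hzv
    have hm' : m' = m + i + 1 := by rw [← hF'.dist_eq m', hchild]
    have hbtw : Btw G v (F m) (F' m') :=
      Btw.trans_left hc (btw_of_adj hzx.symm (by rw [hF.dist_eq]; omega)) (hF.btw (by omega))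
    have hend : F' (m + K) = F (m + K) :=
      huniq _ _ (Btw.trans_left hc (hF'.btw (i := m') (by omega)) hbtw) (hF'.dist_eq _)
        (hF.btw (by omega)) (hF.dist_eq _)
    have hzF : F' m' = F (m + (i + 1)) :=
      eq_of_btw_of_dist_eq hT (hend ▸ hF'.btw (i := m') (by omega)) (hF.btw (by omega))
        (by rw [hF'.dist_eq, hF.dist_eq]; omega)
    rcases (Nat.add_one_le_of_lt hi).lt_or_eq with hlt | rfl
    · exact absurd (hzF ▸ hmem hlt) hz
    · exact .inr hzF
  · have hzF : z = F (m + i - 1) :=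
      eq_of_btw_of_dist_eq hT (btw_of_adj hzx hparent) (hF.btw (Nat.sub_le _ 1))
        (by rw [hF.dist_eq] at hparent ⊢; omega)
    rcases Nat.eq_zero_or_pos i with rfl | hi₀
    · exact .inl hzF
    · rw [Nat.add_sub_assoc hi₀] at hzF
      exact absurd (hzF ▸ hmem (by omega)) hz

lemma exists_card_eq_encard_vboundary_le_two (hT : G.IsTree) (hgc : GeodComplete G v) {x₀ : V}
    (hx₀ : x₀ ≠ v) {K : ℕ} (hK : ¬KPseudoRegular G v K) :
    ∃ A : Finset V, A.card = K ∧ (vboundary G A).encard ≤ 2 := by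
  classical
  simp only [KPseudoRegular, not_forall, not_exists, not_and] at hK
  obtain ⟨a, ha⟩ := hK
  obtain ⟨F, m, hF, rfl⟩ := exists_isRay_apply_eq hgc hx₀ a
  refine ⟨(Finset.range K).image (F <| m + ·), ?_, ?_⟩
  · rw [Finset.card_image_of_injective _ fun i j h => add_left_cancel (hF.injective h),
      Finset.card_range]
  have huniq (y₁ y₂ : V) (h₁ : Btw G v (F m) y₁) (hd₁ : G.dist v y₁ = m + K)
      (h₂ : Btw G v (F m) y₂) (hd₂ : G.dist v y₂ = m + K) : y₁ = y₂ := by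
    by_contra hne
    rw [← hF.dist_eq m] at hd₁ hd₂
    exact ha y₁ y₂ hne hd₁ h₁ hd₂ h₂
  calc (vboundary G _).encard ≤ ({F (m - 1), F (m + K)} : Set V).encard :=
        Set.encard_le_encard (vboundary_image_ray_subset hT hgc hF huniq)
    _ ≤ 2 := (Set.encard_insert_le _ _).trans (by rw [Set.encard_singleton]; rfl)

lemma cheeger_eq_zero_of_forall_not_kPseudoRegular (hT : G.IsTree) (hgc : GeodComplete G v)
    (h : ∀ K, ¬KPseudoRegular G v K) : cheeger G = 0 := by
  by_cases hV : ∃ x₀, x₀ ≠ v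
  · obtain ⟨x₀, hx₀⟩ := hV
    exact cheeger_eq_zero_of_forall_exists_card_eq 2 fun K _ =>
      exists_card_eq_encard_vboundary_le_two hT hgc hx₀ (h K)
  push Not at hV
  have hempty : vboundary G {v} = ∅ :=
    Set.eq_empty_of_forall_notMem fun w hw => hw.1 (by simp [hV w])
  refine le_antisymm ?_ bot_le
  calc cheeger G ≤ eratio G {v} := iInf₂_le _ (Finset.singleton_nonempty v)
    _ = 0 := by simp [eratio, hempty]

end Rays

theorem cheeger_pos_iff_pseudoRegular (G : SimpleGraph V) (v : V) (hT : G.IsTree)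
    (hgc : GeodComplete G v) :
    (0 < cheeger G ↔ ∃ K : ℕ, KPseudoRegular G v K) ∧
      ∀ K : ℕ, KPseudoRegular G v K → ((7 * K : ℕ) : ℝ≥0∞)⁻¹ ≤ cheeger G := by
  have hbound (K : ℕ) (hK : KPseudoRegular G v K) : ((7 * K : ℕ) : ℝ≥0∞)⁻¹ ≤ cheeger G :=
    inv_le_cheeger_of_card_le _ fun _ _ _ hB =>
      (card_le_two_mul_card_of_vboundary_eq hT hK hB).trans
        (Nat.mul_le_mul_right _ (Nat.mul_le_mul_right _ (by norm_num)))
  refine ⟨⟨fun hpos => ?_, fun ⟨K, hK⟩ => ?_⟩, hbound⟩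
  · by_contra hnot
    push Not at hnot
    exact hpos.ne' (cheeger_eq_zero_of_forall_not_kPseudoRegular hT hgc hnot)
  · exact (ENNReal.inv_pos.mpr (ENNReal.natCast_ne_top _)).trans_le (hbound K hK)

end TreePaper
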